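/- Let (X,u) and (Y,v) be closure spaces and let 𝒜 be a collection of compact subsets of (X,u). Then the 𝒜-topology on Y^X is proper. -/

import Mathlib

open Set

universe u

/-- A Čech closure operator on a type `X`: it satisfies (C1) `cl ∅ = ∅`,
(C2) `A ⊆ cl A` and (C3) `cl (A ∪ B) = cl A ∪ cl B`.  The pair `(X, u)` is a
(Čech) closure space. -/
structure CechClosure (X : Type u) : Type u where
  cl : Set X → Set X
  cl_empty : cl ∅ = ∅
  subset_cl : ∀ A : Set X, A ⊆ cl A
  cl_union : ∀ A B : Set X, cl (A ∪ B) = cl A ∪ cl B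

namespace CechClosure

variable {X Y Z : Type u}

/-- The interior operator of a closure space: `int_u A = X \ u (X \ A)`. -/
def interior (u : CechClosure X) (A : Set X) : Set X := (u.cl Aᶜ)ᶜ

/-- `U` is a neighbourhood of `x` in `(X, u)` if `x ∈ int_u U`. -/
def Nhd (u : CechClosure X) (x : X) (U : Set X) : Prop := x ∈ u.interior U

theorem interior_subset (u : CechClosure X) (A : Set X) : u.interior A ⊆ A := by
  intro x hx
  by_contra h
  exact hx (u.subset_cl _ h)

theorem interior_inter (u : CechClosure X) (A B : Set X) :
    u.interior (A ∩ B) = u.interior A ∩ u.interior B := by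
  unfold interior
  rw [compl_inter, u.cl_union, compl_union]

theorem nhd_univ (u : CechClosure X) (x : X) : u.Nhd x univ := by
  simp [Nhd, interior, u.cl_empty]

theorem nhd_inter (u : CechClosure X) {x : X} {A B : Set X} (hA : u.Nhd x A)
    (hB : u.Nhd x B) : u.Nhd x (A ∩ B) := by
  have h := u.interior_inter A B
  unfold Nhd at *
  rw [h]
  exact ⟨hA, hB⟩

/-- A function `f : (X, u) → (Y, v)` between closure spaces is continuous if
`f (u A) ⊆ v (f A)` for every `A ⊆ X`. -/
def Continuous (u : CechClosure X) (v : CechClosure Y) (f : X → Y) : Prop :=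
  ∀ A : Set X, f '' u.cl A ⊆ v.cl (f '' A)

/-- The product of two closure spaces: `(z, x)` is in the closure of `S` iff every
"rectangle" `W ×ˢ U` of neighbourhoods `W` of `z` and `U` of `x` meets `S`. -/
def prod (w : CechClosure Z) (u : CechClosure X) : CechClosure (Z × X) where
  cl S := {p | ∀ W U, w.Nhd p.1 W → u.Nhd p.2 U → (W ×ˢ U ∩ S).Nonempty}
  cl_empty := by
    ext p
    simp only [mem_setOf_eq, mem_empty_iff_false, iff_false]
    intro h
    rcases h univ univ (w.nhd_univ _) (u.nhd_univ _) with ⟨q, -, hq⟩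
    exact hq
  subset_cl := by
    intro S p hp W U hW hU
    exact ⟨p, ⟨⟨w.interior_subset _ hW, u.interior_subset _ hU⟩, hp⟩⟩
  cl_union := by
    intro S T
    ext p
    simp only [mem_setOf_eq, mem_union]
    constructor
    · intro h
      by_contra hc
      push_neg at hc
      obtain ⟨h1, h2⟩ := hc
      simp only [← Set.not_nonempty_iff_eq_empty] at h1 h2
      obtain ⟨W1, U1, hW1, hU1, hne1⟩ := h1
      obtain ⟨W2, U2, hW2, hU2, hne2⟩ := h2
      rcases h (W1 ∩ W2) (U1 ∩ U2) (w.nhd_inter hW1 hW2) (u.nhd_inter hU1 hU2) with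
        ⟨q, ⟨⟨hq1, hq2⟩, hqST⟩⟩
      rcases hqST with hqS | hqT
      · exact hne1 ⟨q, ⟨⟨hq1.1, hq2.1⟩, hqS⟩⟩
      · exact hne2 ⟨q, ⟨⟨hq1.2, hq2.2⟩, hqT⟩⟩
    · rintro (h | h) W U hW hU
      · rcases h W U hW hU with ⟨q, hq1, hq2⟩
        exact ⟨q, hq1, Or.inl hq2⟩
      · rcases h W U hW hU with ⟨q, hq1, hq2⟩
        exact ⟨q, hq1, Or.inr hq2⟩

/-- `Y^X`: the type of continuous functions between the closure spaces
`(X, u)` and `(Y, v)`. -/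
def ContMap (u : CechClosure X) (v : CechClosure Y) : Type u :=
  {f : X → Y // Continuous u v f}

/-- A closure operator `σ` on `Y^X` is proper (splitting) if for every closure space
`(Z, w)`, continuity of `g : (Z, w) × (X, u) → (Y, v)` implies continuity of
`g* : (Z, w) → (Y^X, σ)`, where `g (z, x) = (g* z) x`. -/
def Proper (u : CechClosure X) (v : CechClosure Y) (σ : CechClosure (ContMap u v)) : Prop :=
  ∀ (Z : Type u) (w : CechClosure Z) (G : Z → ContMap u v),
    Continuous (w.prod u) v (fun p => (G p.1).1 p.2) → Continuous w σ G

/-- A closure operator `σ` on `Y^X` is admissible (jointly continuous) if for every closure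
space `(Z, w)`, continuity of `g* : (Z, w) → (Y^X, σ)` implies continuity of
`g : (Z, w) × (X, u) → (Y, v)`, where `g (z, x) = (g* z) x`. -/
def Admissible (u : CechClosure X) (v : CechClosure Y) (σ : CechClosure (ContMap u v)) : Prop :=
  ∀ (Z : Type u) (w : CechClosure Z) (G : Z → ContMap u v),
    Continuous w σ G → Continuous (w.prod u) v (fun p => (G p.1).1 p.2)

/-- A topological space regarded as a closure space via its (Kuratowski) closure operator. -/
def ofTop {Z : Type u} (t : TopologicalSpace Z) : CechClosure Z :=
  letI := t
  { cl := fun A => _root_.closure A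
    cl_empty := closure_empty
    subset_cl := fun _ => subset_closure
    cl_union := fun _ _ => closure_union }

/-- `le` is the order relation of a directed set: a reflexive and transitive relation on a
nonempty type in which every two elements have an upper bound. -/
structure IsDirectedOrder {Λ : Type*} (le : Λ → Λ → Prop) : Prop where
  refl : ∀ a, le a a
  trans : ∀ a b c, le a b → le b c → le a c
  directed : ∀ a b, ∃ c, le a c ∧ le b c
  nonempty : Nonempty Λ

/-- Convergence of a net `s : Λ → X` (with order `le` on `Λ`) to a point `x` in a closure
space `(X, u)`: every neighbourhood of `x` contains `s l` residually. -/
def NetConv (u : CechClosure X) {Λ : Type*} (le : Λ → Λ → Prop) (s : Λ → X) (x : X) : Prop :=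
  ∀ U : Set X, u.Nhd x U → ∃ l₀, ∀ l, le l₀ l → s l ∈ U

/-- The product order on `Λ × M`. -/
def prodLE {Λ M : Type*} (leΛ : Λ → Λ → Prop) (leM : M → M → Prop) :
    Λ × M → Λ × M → Prop :=
  fun p q => leΛ p.1 q.1 ∧ leM p.2 q.2

/-- A net `F : Λ → Y^X` converges continuously to `f ∈ Y^X` if for every `x ∈ X` and every
net `s : M → X` converging to `x` in `(X, u)`, the net `(l, m) ↦ (F l) (s m)` (indexed by
`Λ × M` with the product order) converges to `f x` in `(Y, v)`. -/
def ContConv (u : CechClosure X) (v : CechClosure Y) {Λ : Type u} (leΛ : Λ → Λ → Prop)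
    (F : Λ → ContMap u v) (f : ContMap u v) : Prop :=
  ∀ (M : Type u) (leM : M → M → Prop), IsDirectedOrder leM →
    ∀ (s : M → X) (x : X), NetConv u leM s x →
      NetConv v (prodLE leΛ leM) (fun p : Λ × M => (F p.1).1 (s p.2)) (f.1 x)

/-- The upper limit of a net `A : Λ → Set X` of subsets of a closure space `(X, u)`: the set
of points `x` such that for every `l₀` and every neighbourhood `U` of `x` there is `l ≥ l₀`
with `A l ∩ U ≠ ∅`. -/
def UpperLim (u : CechClosure X) {Λ : Type*} (le : Λ → Λ → Prop) (A : Λ → Set X) : Set X :=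
  {x | ∀ (l₀ : Λ) (U : Set X), u.Nhd x U → ∃ l, le l₀ l ∧ (A l ∩ U).Nonempty}

/-- `g : M → α` is a subnet of `f : Λ → α`: there is `φ : M → Λ` with `g = f ∘ φ` such that
`φ` is residually above any given index of `Λ`. -/
def IsSubnet {α : Type*} {Λ M : Type*} (leΛ : Λ → Λ → Prop) (leM : M → M → Prop)
    (f : Λ → α) (g : M → α) : Prop :=
  ∃ φ : M → Λ, (∀ m, g m = f (φ m)) ∧ ∀ l₀, ∃ m₀, ∀ m, leM m₀ m → leΛ l₀ (φ m)

end CechClosure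
namespace CechClosure

variable {X Y : Type u}

/-- A subset `A` of a closure space `(X, u)` is compact if every interior cover of `A`
(a family of sets whose interiors cover `A`) has a finite subcover. -/
def IsCompactSubset (u : CechClosure X) (A : Set X) : Prop :=
  ∀ 𝒢 : Set (Set X), (∀ x ∈ A, ∃ G ∈ 𝒢, x ∈ u.interior G) →
    ∃ F : Finset (Set X), ↑F ⊆ 𝒢 ∧ A ⊆ ⋃₀ (F : Set (Set X))

/-- The `𝒜`-topology on `Y^X`, for a family `𝒜` of subsets of `X`: the topology with
subbase all sets `(A, V) = {f | f '' A ⊆ V}` with `A ∈ 𝒜` and `V ⊆ Y` open and nonempty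
(`V = int_v V ≠ ∅`). -/
def setTopology (u : CechClosure X) (v : CechClosure Y) (𝒜 : Set (Set X)) :
    TopologicalSpace (ContMap u v) :=
  TopologicalSpace.generateFrom
    {S | ∃ A ∈ 𝒜, ∃ V : Set Y, v.interior V = V ∧ (v.interior V).Nonempty ∧
      S = {f : ContMap u v | f.1 '' A ⊆ V}}

/-! For a subbasic open set `(A, V)` containing `g* z`, continuity of `g` makes `g⁻¹ V` a
neighbourhood of every `(z, x)` with `x ∈ A`, and compactness of `A` yields a tube `W ×ˢ A`
inside it (the sets `U` admitting such a tube `W ×ˢ U` are closed under finite unions). So `g*`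
pulls subbasic, hence all, open sets containing `g* z` back to neighbourhoods of `z`, which is
continuity into the Kuratowski closure. -/

variable {Z : Type u}

open Topology

theorem cl_mono (u : CechClosure X) {A B : Set X} (h : A ⊆ B) : u.cl A ⊆ u.cl B := by
  rw [← union_eq_self_of_subset_left h, u.cl_union]
  exact subset_union_left

theorem nhd_mono (u : CechClosure X) {x : X} {A B : Set X} (hA : u.Nhd x A) (h : A ⊆ B) :
    u.Nhd x B :=
  fun hx => hA (u.cl_mono (compl_subset_compl.mpr h) hx)

theorem inter_nonempty_of_mem_cl_of_nhd (u : CechClosure X) {x : X} {S U : Set X}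
    (hx : x ∈ u.cl S) (hU : u.Nhd x U) : (U ∩ S).Nonempty := by
  by_contra h
  exact hU (u.cl_mono (fun s hs hsU => h ⟨s, hsU, hs⟩) hx)

theorem Continuous.nhd_preimage {u : CechClosure X} {v : CechClosure Y} {f : X → Y}
    (hf : Continuous u v f) {x : X} {V : Set Y} (hV : v.Nhd (f x) V) : u.Nhd x (f ⁻¹' V) :=
  fun hx => hV (v.cl_mono (image_preimage_subset f Vᶜ) (hf _ ⟨x, hx, rfl⟩))

theorem prod_nhd_iff (w : CechClosure Z) (u : CechClosure X) (p : Z × X) (T : Set (Z × X)) :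
    (w.prod u).Nhd p T ↔ ∃ W U, w.Nhd p.1 W ∧ u.Nhd p.2 U ∧ W ×ˢ U ⊆ T := by
  simp only [Nhd, interior, prod, mem_compl_iff, mem_ofPred_eq, not_forall, exists_prop,
    not_nonempty_iff_eq_empty, ← sdiff_eq, sdiff_eq_empty]

theorem exists_nhd_prod_subset_of_isCompactSubset (w : CechClosure Z) (u : CechClosure X)
    {A : Set X} (hA : IsCompactSubset u A) {z : Z} {T : Set (Z × X)}
    (hT : ∀ x ∈ A, (w.prod u).Nhd (z, x) T) : ∃ W, w.Nhd z W ∧ W ×ˢ A ⊆ T := by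
  classical
  set 𝒢 : Set (Set X) := {U | ∃ W, w.Nhd z W ∧ W ×ˢ U ⊆ T}
  have union_mem : ∀ F : Finset (Set X), ↑F ⊆ 𝒢 → ⋃₀ (F : Set (Set X)) ∈ 𝒢 := by
    intro F
    induction F using Finset.induction_on with
    | empty => exact fun _ => ⟨univ, w.nhd_univ z, by simp⟩
    | insert U F _ ih =>
      intro hF
      obtain ⟨W₁, hW₁, hU⟩ := hF (Finset.mem_insert_self U F)
      obtain ⟨W₂, hW₂, hFT⟩ := ih ((Finset.coe_subset.mpr (Finset.subset_insert U F)).trans hF)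
      refine ⟨W₁ ∩ W₂, w.nhd_inter hW₁ hW₂, ?_⟩
      rw [Finset.coe_insert, sUnion_insert, prod_union]
      exact union_subset (subset_trans (prod_mono inter_subset_left le_rfl) hU)
        (subset_trans (prod_mono inter_subset_right le_rfl) hFT)
  have cover : ∀ x ∈ A, ∃ U ∈ 𝒢, x ∈ u.interior U := by
    intro x hx
    obtain ⟨W, U, hW, hU, hWU⟩ := (prod_nhd_iff w u _ T).mp (hT x hx)
    exact ⟨U, ⟨W, hW, hWU⟩, hU⟩
  obtain ⟨F, hF𝒢, hAF⟩ := hA 𝒢 cover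
  obtain ⟨W, hW, hWF⟩ := union_mem F hF𝒢
  exact ⟨W, hW, subset_trans (prod_mono le_rfl hAF) hWF⟩

theorem nhd_preimage_of_isOpen_generateFrom {α : Type*} (w : CechClosure Z) {B : Set (Set α)}
    {G : Z → α} {z : Z} (hB : ∀ O ∈ B, G z ∈ O → w.Nhd z (G ⁻¹' O)) {O : Set α}
    (hO : IsOpen[TopologicalSpace.generateFrom B] O) (hzO : G z ∈ O) : w.Nhd z (G ⁻¹' O) := by
  induction hO with
  | basic O hOB => exact hB O hOB hzO
  | univ => exact w.nhd_univ z
  | inter O₁ O₂ _ _ ih₁ ih₂ => exact w.nhd_inter (ih₁ hzO.1) (ih₂ hzO.2)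
  | sUnion 𝒪 _ ih =>
    obtain ⟨O, hO𝒪, hzO⟩ := hzO
    exact w.nhd_mono (ih O hO𝒪 hzO) (preimage_mono (subset_sUnion_of_mem hO𝒪))

theorem continuous_ofTop_of_nhd_preimage {α : Type u} (w : CechClosure Z)
    (t : TopologicalSpace α) {G : Z → α}
    (hG : ∀ z O, IsOpen[t] O → G z ∈ O → w.Nhd z (G ⁻¹' O)) : Continuous w (ofTop t) G := by
  rintro S _ ⟨z, hz, rfl⟩
  refine (@mem_closure_iff _ t _ _).mpr fun O hO hzO => ?_
  obtain ⟨z', hz'O, hz'S⟩ := w.inter_nonempty_of_mem_cl_of_nhd hz (hG z O hO hzO)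
  exact ⟨G z', hz'O, z', hz'S, rfl⟩

/-- Let `(X, u)` and `(Y, v)` be closure spaces and `𝒜` a collection of compact subsets
of `(X, u)`.  Then the `𝒜`-topology on `Y^X` is proper. -/
theorem setTopology_proper (u : CechClosure X) (v : CechClosure Y) (𝒜 : Set (Set X))
    (hA : ∀ A ∈ 𝒜, IsCompactSubset u A) :
    Proper u v (ofTop (setTopology u v 𝒜)) := by
  intro Z w G hg
  refine continuous_ofTop_of_nhd_preimage w _ fun z O hO hzO => ?_
  refine nhd_preimage_of_isOpen_generateFrom w ?_ hO hzO
  rintro _ ⟨A, hA𝒜, V, hV, -, rfl⟩ hGz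
  have tube : ∀ x ∈ A, (w.prod u).Nhd (z, x) ((fun p => (G p.1).1 p.2) ⁻¹' V) := by
    intro x hx
    refine hg.nhd_preimage ?_
    rw [Nhd, hV]
    exact hGz ⟨x, hx, rfl⟩
  obtain ⟨W, hW, hWA⟩ := exists_nhd_prod_subset_of_isCompactSubset w u (hA A hA𝒜) tube
  refine w.nhd_mono hW fun z' hz' => ?_
  rintro _ ⟨x, hx, rfl⟩
  exact hWA (mk_mem_prod hz' hx)

end CechClosure
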